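/- arXiv:0709.2488 — 4 statements merged into one kernel-verified Lean document; each statement's English description precedes it below -/
import Mathlib

section
/- Let A = (A_α, A_β, A_γ, A_δ, A_ε, A_ζ) and A' be two tuples of matrices of sizes n1×n1, n2×n1, n3×n1, n3×n1, n3×n2, n3×n3 over a field of characteristic 0. Define M = I_{n1} ⊕ 2I_{n2} ⊕ 3I_{n3} ⊕ 4I_{n3} and N the 4×4 block matrix with first block column [A_α; A_β; A_γ; A_δ], block (4,2) = A_ε, block (4,3) = I_{n3}, block (4,4) = A_ζ, all other blocks zero; define N' similarly from A'. Then the pairs (M,N) and (M,N') are simultaneously similar (there is an invertible S with S⁻¹MS = M and S⁻¹NS = N') if and only if there exist invertible matrices S1, S2, S3 of sizes n1, n2, n3 with A'_α = S1 A_α S1⁻¹, A'_β = S2 A_β S1⁻¹, A'_γ = S3 A_γ S1⁻¹, A'_δ = S3 A_δ S1⁻¹, A'_ε = S3 A_ε S2⁻¹, A'_ζ = S3 A_ζ S3⁻¹. -/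
/-!
Conjugating by `S` is the same as intertwining with `T = S⁻¹`. Since `1, 2, 3, 4` are distinct
in characteristic zero, a matrix commuting with `M` is block diagonal, `T = diag(T₁, T₂, T₃, T₄)`.
The identity block of `N` in position `(4,3)` then forces `T₃ = T₄`, and the other blocks of
`T N = N' T` are exactly the relations saying that `(T₁, T₂, T₃)` is an isomorphism of quiver
representations from `A` to `A'`.
-/

open Matrix

section
variable {k : Type*} [Field k] {n1 n2 n3 : ℕ}

/-- The matrix `M = I_{n1} ⊕ 2I_{n2} ⊕ 3I_{n3} ⊕ 4I_{n3}`. -/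
noncomputable def Mmat (k : Type*) [Field k] (n1 n2 n3 : ℕ) :
    Matrix ((Fin n1 ⊕ Fin n2) ⊕ (Fin n3 ⊕ Fin n3))
           ((Fin n1 ⊕ Fin n2) ⊕ (Fin n3 ⊕ Fin n3)) k :=
  Matrix.fromBlocks (Matrix.fromBlocks 1 0 0 ((2 : k) • 1)) 0 0
    (Matrix.fromBlocks ((3 : k) • 1) 0 0 ((4 : k) • 1))

/-- The matrix `N` built from a representation
`(Aα, Aβ, Aγ, Aδ, Aε, Aζ)` of the quiver (2.1). -/
noncomputable def Nmat (Aα : Matrix (Fin n1) (Fin n1) k) (Aβ : Matrix (Fin n2) (Fin n1) k)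
    (Aγ Aδ : Matrix (Fin n3) (Fin n1) k) (Aε : Matrix (Fin n3) (Fin n2) k)
    (Aζ : Matrix (Fin n3) (Fin n3) k) :
    Matrix ((Fin n1 ⊕ Fin n2) ⊕ (Fin n3 ⊕ Fin n3))
           ((Fin n1 ⊕ Fin n2) ⊕ (Fin n3 ⊕ Fin n3)) k :=
  Matrix.fromBlocks (Matrix.fromBlocks Aα 0 Aβ 0) 0
    (Matrix.fromBlocks Aγ 0 Aδ Aε) (Matrix.fromBlocks 0 0 1 Aζ)

namespace Matrix

variable {R : Type*} [CommRing R] {m n : Type*} [Fintype n] [DecidableEq n]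

theorem eq_mul_nonsing_inv_iff_mul_eq {P : Matrix n n R} (hP : IsUnit P) {Y Z : Matrix m n R} :
    Y = Z * P⁻¹ ↔ Z = Y * P := by
  have hdet := (isUnit_iff_isUnit_det P).mp hP
  constructor
  · rintro rfl
    rw [nonsing_inv_mul_cancel_right _ _ hdet]
  · rintro rfl
    rw [mul_nonsing_inv_cancel_right _ _ hdet]

theorem inv_mul_mul_eq_iff_inv_mul_eq {S : Matrix n n R} (hS : IsUnit S) {X Y : Matrix n n R} :
    S⁻¹ * X * S = Y ↔ S⁻¹ * X = Y * S⁻¹ := by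
  have hdet := (isUnit_iff_isUnit_det S).mp hS
  constructor
  · rintro rfl
    rw [mul_nonsing_inv_cancel_right _ _ hdet]
  · intro h
    rw [h, nonsing_inv_mul_cancel_right _ _ hdet]

theorem exists_isUnit_inv_mul_mul_eq_iff (X₁ Y₁ X₂ Y₂ : Matrix n n R) :
    (∃ S : Matrix n n R, IsUnit S ∧ S⁻¹ * X₁ * S = Y₁ ∧ S⁻¹ * X₂ * S = Y₂) ↔
      ∃ T : Matrix n n R, IsUnit T ∧ T * X₁ = Y₁ * T ∧ T * X₂ = Y₂ * T := by
  constructor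
  · rintro ⟨S, hS, h₁, h₂⟩
    rw [inv_mul_mul_eq_iff_inv_mul_eq hS] at h₁ h₂
    exact ⟨S⁻¹, isUnit_nonsing_inv_iff.mpr hS, h₁, h₂⟩
  · rintro ⟨T, hT, h₁, h₂⟩
    have hT' : IsUnit T⁻¹ := isUnit_nonsing_inv_iff.mpr hT
    refine ⟨T⁻¹, hT', ?_, ?_⟩ <;>
      rwa [inv_mul_mul_eq_iff_inv_mul_eq hT',
        nonsing_inv_nonsing_inv T ((isUnit_iff_isUnit_det T).mp hT)]

theorem apply_eq_zero_of_mul_diagonal_eq_diagonal_mul [NoZeroDivisors R] {S : Matrix n n R}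
    {d : n → R} (h : S * diagonal d = diagonal d * S) {i j : n} (hij : d i ≠ d j) :
    S i j = 0 := by
  have hentry : S i j * d j = d i * S i j := by
    simpa only [mul_diagonal, diagonal_mul] using congr_fun₂ h i j
  have : (d j - d i) * S i j = 0 := by rw [sub_mul, mul_comm, hentry, sub_self]
  exact (mul_eq_zero.mp this).resolve_left (sub_ne_zero.mpr hij.symm)

end Matrix

def blockDiag4 {l m n o : Type*} {R : Type*} [Zero R] (A : Matrix l l R) (B : Matrix m m R)
    (C : Matrix n n R) (D : Matrix o o R) : Matrix ((l ⊕ m) ⊕ (n ⊕ o)) ((l ⊕ m) ⊕ (n ⊕ o)) R :=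
  fromBlocks (fromBlocks A 0 0 B) 0 0 (fromBlocks C 0 0 D)

theorem isUnit_blockDiag4_iff {l m n o : Type*} [Fintype l] [Fintype m] [Fintype n] [Fintype o]
    [DecidableEq l] [DecidableEq m] [DecidableEq n] [DecidableEq o] {R : Type*} [CommRing R]
    {A : Matrix l l R} {B : Matrix m m R} {C : Matrix n n R} {D : Matrix o o R} :
    IsUnit (blockDiag4 A B C D) ↔ IsUnit A ∧ IsUnit B ∧ IsUnit C ∧ IsUnit D := by
  simp only [blockDiag4, isUnit_fromBlocks_zero₂₁, and_assoc]

theorem Mmat_eq_diagonal :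
    Mmat k n1 n2 n3 = diagonal (Sum.elim (Sum.elim (fun _ ↦ 1) (fun _ ↦ 2))
      (Sum.elim (fun _ ↦ 3) (fun _ ↦ 4))) := by
  simp only [Mmat, smul_one_eq_diagonal]
  simp only [← diagonal_one, fromBlocks_diagonal]

theorem mul_Mmat_eq_Mmat_mul_iff [CharZero k]
    {T : Matrix ((Fin n1 ⊕ Fin n2) ⊕ (Fin n3 ⊕ Fin n3)) ((Fin n1 ⊕ Fin n2) ⊕ (Fin n3 ⊕ Fin n3)) k} :
    T * Mmat k n1 n2 n3 = Mmat k n1 n2 n3 * T ↔ ∃ T1 T2 T3 T4, T = blockDiag4 T1 T2 T3 T4 := by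
  constructor
  · intro h
    rw [Mmat_eq_diagonal] at h
    refine ⟨T.toBlocks₁₁.toBlocks₁₁, T.toBlocks₁₁.toBlocks₂₂, T.toBlocks₂₂.toBlocks₁₁,
      T.toBlocks₂₂.toBlocks₂₂, ?_⟩
    ext (((i | i) | (i | i))) (((j | j) | (j | j))) <;>
      first
      | rfl
      | exact apply_eq_zero_of_mul_diagonal_eq_diagonal_mul h (by norm_num)
  · rintro ⟨T1, T2, T3, T4, rfl⟩
    simp [blockDiag4, Mmat, fromBlocks_multiply]

theorem blockDiag4_mul_Nmat_eq_iff (T1 : Matrix (Fin n1) (Fin n1) k)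
    (T2 : Matrix (Fin n2) (Fin n2) k) (T3 T4 : Matrix (Fin n3) (Fin n3) k)
    (Aα Aα' : Matrix (Fin n1) (Fin n1) k) (Aβ Aβ' : Matrix (Fin n2) (Fin n1) k)
    (Aγ Aγ' Aδ Aδ' : Matrix (Fin n3) (Fin n1) k) (Aε Aε' : Matrix (Fin n3) (Fin n2) k)
    (Aζ Aζ' : Matrix (Fin n3) (Fin n3) k) :
    blockDiag4 T1 T2 T3 T4 * Nmat Aα Aβ Aγ Aδ Aε Aζ =
        Nmat Aα' Aβ' Aγ' Aδ' Aε' Aζ' * blockDiag4 T1 T2 T3 T4 ↔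
      T4 = T3 ∧ T1 * Aα = Aα' * T1 ∧ T2 * Aβ = Aβ' * T1 ∧ T3 * Aγ = Aγ' * T1 ∧
        T4 * Aδ = Aδ' * T1 ∧ T4 * Aε = Aε' * T2 ∧ T4 * Aζ = Aζ' * T4 := by
  simp only [blockDiag4, Nmat, fromBlocks_multiply, Matrix.one_mul, Matrix.mul_one,
    Matrix.zero_mul, Matrix.mul_zero, add_zero, zero_add, fromBlocks_inj]
  tauto

/-- The pairs `(M, N)` and `(M, N')` are simultaneously similar if and only if the tuples
`A` and `A'` are isomorphic as representations of the quiver (2.1). -/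
theorem pair_simultaneously_similar_iff_quiver_isomorphic [CharZero k]
    (Aα Aα' : Matrix (Fin n1) (Fin n1) k) (Aβ Aβ' : Matrix (Fin n2) (Fin n1) k)
    (Aγ Aγ' Aδ Aδ' : Matrix (Fin n3) (Fin n1) k) (Aε Aε' : Matrix (Fin n3) (Fin n2) k)
    (Aζ Aζ' : Matrix (Fin n3) (Fin n3) k) :
    (∃ S : Matrix ((Fin n1 ⊕ Fin n2) ⊕ (Fin n3 ⊕ Fin n3))
                  ((Fin n1 ⊕ Fin n2) ⊕ (Fin n3 ⊕ Fin n3)) k,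
        IsUnit S ∧ S⁻¹ * Mmat k n1 n2 n3 * S = Mmat k n1 n2 n3 ∧
        S⁻¹ * Nmat Aα Aβ Aγ Aδ Aε Aζ * S = Nmat Aα' Aβ' Aγ' Aδ' Aε' Aζ')
    ↔ (∃ (S1 : Matrix (Fin n1) (Fin n1) k) (S2 : Matrix (Fin n2) (Fin n2) k)
          (S3 : Matrix (Fin n3) (Fin n3) k),
        IsUnit S1 ∧ IsUnit S2 ∧ IsUnit S3 ∧
        Aα' = S1 * Aα * S1⁻¹ ∧ Aβ' = S2 * Aβ * S1⁻¹ ∧ Aγ' = S3 * Aγ * S1⁻¹ ∧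
        Aδ' = S3 * Aδ * S1⁻¹ ∧ Aε' = S3 * Aε * S2⁻¹ ∧ Aζ' = S3 * Aζ * S3⁻¹) := by
  rw [exists_isUnit_inv_mul_mul_eq_iff]
  constructor
  · rintro ⟨T, hT, hM, hN⟩
    obtain ⟨T1, T2, T3, T4, rfl⟩ := mul_Mmat_eq_Mmat_mul_iff.mp hM
    obtain ⟨rfl, hN⟩ := (blockDiag4_mul_Nmat_eq_iff ..).mp hN
    obtain ⟨h1, h2, h3, -⟩ := isUnit_blockDiag4_iff.mp hT
    refine ⟨T1, T2, T4, h1, h2, h3, ?_⟩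
    simpa only [eq_mul_nonsing_inv_iff_mul_eq h1, eq_mul_nonsing_inv_iff_mul_eq h2,
      eq_mul_nonsing_inv_iff_mul_eq h3] using hN
  · rintro ⟨S1, S2, S3, h1, h2, h3, hA⟩
    simp only [eq_mul_nonsing_inv_iff_mul_eq h1, eq_mul_nonsing_inv_iff_mul_eq h2,
      eq_mul_nonsing_inv_iff_mul_eq h3] at hA
    exact ⟨blockDiag4 S1 S2 S3 S3, isUnit_blockDiag4_iff.mpr ⟨h1, h2, h3, h3⟩,
      mul_Mmat_eq_Mmat_mul_iff.mpr ⟨_, _, _, _, rfl⟩,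
      (blockDiag4_mul_Nmat_eq_iff ..).mpr ⟨rfl, hA⟩⟩

end
end

section
/- Let λ be a scalar, a, b, c, d scalars with ad − bc ≠ 0 and c + dλ ≠ 0, and J_n(λ) the n×n Jordan block with eigenvalue λ. Then the matrix (aI + bJ_n(λ))(cI + dJ_n(λ))⁻¹ is similar to J_n((a + bλ)/(c + dλ)). -/
open Matrix Finset

/-- The `n×n` upper triangular Jordan block with eigenvalue `λ`. -/
def jordanBlock {k : Type*} [Field k] (n : ℕ) (lam : k) : Matrix (Fin n) (Fin n) k :=
  Matrix.of fun i j => if i = j then lam else if (i : ℕ) + 1 = (j : ℕ) then 1 else 0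

section aux
variable {k : Type*} [Field k] {n : ℕ}

lemma jordanBlock_eq (lam : k) :
    jordanBlock n lam = lam • (1 : Matrix (Fin n) (Fin n) k) + jordanBlock n 0 := by
  ext i j
  simp only [jordanBlock, Matrix.of_apply, Matrix.add_apply, Matrix.smul_apply,
    Matrix.one_apply, smul_eq_mul]
  split <;> simp

lemma sum_indicator_mul (p : ℕ) (f : Fin n → k) :
    (∑ l : Fin n, (if p = (l:ℕ) then (1:k) else 0) * f l) =
      if h : p < n then f ⟨p, h⟩ else 0 := by
  split
  · next h =>
    rw [Finset.sum_eq_single ⟨p, h⟩]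
    · simp
    · intro l _ hl
      rw [if_neg (fun he => hl (Fin.ext he.symm)), zero_mul]
    · simp
  · next h =>
    apply Finset.sum_eq_zero
    intro l _
    rw [if_neg (fun he : p = (l:ℕ) => h (he ▸ l.isLt)), zero_mul]

lemma Npow_apply (m : ℕ) (i j : Fin n) :
    ((jordanBlock n (0:k)) ^ m) i j = if (i:ℕ) + m = (j:ℕ) then 1 else 0 := by
  induction m generalizing j with
  | zero => simp [Matrix.one_apply, Fin.ext_iff]
  | succ m ih =>
    rw [pow_succ, Matrix.mul_apply]
    rw [Finset.sum_congr rfl (fun l _ => by rw [ih]), sum_indicator_mul ((i:ℕ)+m)]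
    split
    · next h =>
      simp only [jordanBlock, Matrix.of_apply]
      by_cases hd : (⟨(i:ℕ)+m, h⟩ : Fin n) = j
      · have : (i:ℕ)+m = (j:ℕ) := by simpa [Fin.ext_iff] using hd
        rw [if_pos hd, if_neg (by omega)]
      · rw [if_neg hd]
        have hd' : ¬ ((i:ℕ)+m = (j:ℕ)) := by simpa [Fin.ext_iff] using hd
        by_cases h2 : (i:ℕ)+m+1 = (j:ℕ)
        · rw [if_pos (by simpa using h2), if_pos (by omega)]
        · rw [if_neg (by simpa using h2), if_neg (by omega)]
    · next h => rw [if_neg (by have := j.isLt; omega)]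

lemma Npow_n : (jordanBlock n (0:k)) ^ n = 0 := by
  ext i j
  rw [Npow_apply, if_neg (by have := j.isLt; omega)]
  rfl

lemma NpowMul_apply (M : Matrix (Fin n) (Fin n) k) (m : ℕ) (i j : Fin n) :
    ((jordanBlock n (0:k)) ^ m * M) i j =
      if h : (i:ℕ) + m < n then M ⟨(i:ℕ)+m, h⟩ j else 0 := by
  rw [Matrix.mul_apply]
  rw [Finset.sum_congr rfl (fun l _ => by rw [Npow_apply]), sum_indicator_mul ((i:ℕ)+m)]

lemma mulN_apply (M : Matrix (Fin n) (Fin n) k) (i j : Fin n) :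
    (M * jordanBlock n (0:k)) i j =
      if h : 1 ≤ (j:ℕ) then M i ⟨(j:ℕ)-1, by omega⟩ else 0 := by
  rw [Matrix.mul_apply]
  have hN : ∀ l : Fin n, jordanBlock n (0:k) l j = if (l:ℕ) + 1 = (j:ℕ) then 1 else 0 :=
    fun l => by rw [← pow_one (jordanBlock n (0:k)), Npow_apply]
  split
  · next h =>
    rw [Finset.sum_eq_single ⟨(j:ℕ)-1, by omega⟩]
    · rw [hN, if_pos (by simp; omega), mul_one]
    · intro l _ hl
      have hl' : (l:ℕ) ≠ (j:ℕ) - 1 := fun he => hl (Fin.ext he)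
      rw [hN, if_neg (by omega), mul_zero]
    · simp
  · next h =>
    apply Finset.sum_eq_zero
    intro l _
    rw [hN, if_neg (by omega), mul_zero]

/-- upper triangular with constant diagonal `u` -/
def UT (u : k) (M : Matrix (Fin n) (Fin n) k) : Prop :=
  ∀ i j : Fin n, (j:ℕ) ≤ (i:ℕ) → M i j = if i = j then u else 0

lemma UT_one : UT (1:k) (1 : Matrix (Fin n) (Fin n) k) := fun _ _ _ => Matrix.one_apply

lemma UT.mul {u v : k} {M M' : Matrix (Fin n) (Fin n) k} (hM : UT u M) (hM' : UT v M') :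
    UT (u*v) (M*M') := by
  intro i j hji
  rw [Matrix.mul_apply, Finset.sum_eq_single i]
  · rw [hM i i le_rfl, if_pos rfl, hM' i j hji]
    split <;> simp
  · intro l _ hl
    rcases le_or_gt (l:ℕ) (i:ℕ) with h | h
    · rw [hM i l h, if_neg (fun he => hl he.symm), zero_mul]
    · rw [hM' l j (by omega), if_neg (by simp [Fin.ext_iff]; omega), mul_zero]
  · simp

lemma UT.pow {u : k} {M : Matrix (Fin n) (Fin n) k} (hM : UT u M) (m : ℕ) :
    UT (u^m) (M^m) := by
  induction m with
  | zero => simpa using UT_one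
  | succ m ih => rw [pow_succ, pow_succ]; exact ih.mul hM

end aux

/-- If `ad − bc ≠ 0` and `c + dλ ≠ 0`, then `(aI + bJ_n(λ))(cI + dJ_n(λ))⁻¹` is similar
to the Jordan block `J_n((a + bλ)/(c + dλ))`. -/
theorem jordan_linear_fractional_similarity
    (k : Type*) [Field k] (n : ℕ) (lam a b c d : k)
    (hdet : a * d - b * c ≠ 0) (hden : c + d * lam ≠ 0) :
    ∃ P : Matrix (Fin n) (Fin n) k, IsUnit P ∧
      P⁻¹ * ((a • (1 : Matrix (Fin n) (Fin n) k) + b • jordanBlock n lam) *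
        (c • (1 : Matrix (Fin n) (Fin n) k) + d • jordanBlock n lam)⁻¹) * P
      = jordanBlock n ((a + b * lam) / (c + d * lam)) := by
  rcases Nat.eq_zero_or_pos n with hn | hn
  · subst hn
    exact ⟨1, isUnit_one, Subsingleton.elim _ _⟩
  set γ : k := c + d * lam with hγdef
  set α : k := a + b * lam with hαdef
  have hγ : γ ≠ 0 := hden
  set μ : k := α / γ with hμdef
  set β : k := b - μ * d with hβdef
  have hβ : β ≠ 0 := by
    rw [hβdef, hμdef]
    intro h0
    rw [sub_eq_zero] at h0
    field_simp at h0
    exact hdet (by linear_combination -h0)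
  set N : Matrix (Fin n) (Fin n) k := jordanBlock n (0:k) with hNdef
  set x : Matrix (Fin n) (Fin n) k := (-(d * γ⁻¹)) • N with hxdef
  set S : Matrix (Fin n) (Fin n) k := ∑ i ∈ Finset.range n, x ^ i with hSdef
  set C : Matrix (Fin n) (Fin n) k := γ⁻¹ • S with hCdef
  set A : Matrix (Fin n) (Fin n) k := a • 1 + b • jordanBlock n lam with hAdef
  set B : Matrix (Fin n) (Fin n) k := c • 1 + d • jordanBlock n lam with hBdef
  have hB : B = γ • 1 + d • N := by
    rw [hBdef, jordanBlock_eq lam, hγdef, hNdef]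
    module
  have hA : A = α • 1 + b • N := by
    rw [hAdef, jordanBlock_eq lam, hαdef, hNdef]
    module
  have hxn : x ^ n = 0 := by
    rw [hxdef, smul_pow, hNdef, Npow_n, smul_zero]
  have hB2 : B = (-γ) • (x - 1) := by
    rw [hB, hxdef, smul_sub, smul_smul]
    have : -γ * -(d * γ⁻¹) = d := by field_simp
    rw [this]
    module
  have hCB : C * B = 1 := by
    rw [hCdef, hB2, Matrix.smul_mul, Matrix.mul_smul, hSdef, geom_sum_mul, hxn, zero_sub,
      smul_smul, smul_neg]
    have : γ⁻¹ * -γ = -1 := by field_simp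
    rw [this]
    simp
  have hBC : B * C = 1 := mul_eq_one_comm.mp hCB
  have hBinv : B⁻¹ = C := Matrix.inv_eq_left_inv hCB
  have hcomm : Commute N C := by
    rw [hCdef]
    exact Commute.smul_right
      (Commute.sum_right _ _ _ fun i _ => ((Commute.refl N).smul_right _).pow_right i) _
  have hμγ : μ * γ = α := div_mul_cancel₀ α hγ
  have hA2 : A = μ • B + β • N := by
    rw [hA, hB, hβdef, smul_add, smul_smul, smul_smul, hμγ]
    module
  set T : Matrix (Fin n) (Fin n) k := β • (N * C) with hTdef
  have hM : A * C = μ • 1 + T := by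
    rw [hA2, add_mul, Matrix.smul_mul, Matrix.smul_mul, hBC, hTdef]
  have hTpow : ∀ m : ℕ, T ^ m = β ^ m • (N ^ m * C ^ m) := by
    intro m
    rw [hTdef, smul_pow, hcomm.mul_pow]
  have hTn : T ^ n = 0 := by
    rw [hTpow, hNdef, Npow_n, Matrix.zero_mul, smul_zero]
  have hUTC : UT γ⁻¹ C := by
    intro i j hji
    rw [hCdef, Matrix.smul_apply, hSdef, Matrix.sum_apply]
    have hterm : ∀ m ∈ Finset.range n, (x ^ m) i j =
        if m = 0 ∧ i = j then 1 else 0 := by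
      intro m _
      rw [hxdef, smul_pow, Matrix.smul_apply, hNdef, Npow_apply]
      by_cases h : (i:ℕ) + m = (j:ℕ)
      · have hm : m = 0 := by omega
        have hij : i = j := Fin.ext (by omega)
        rw [if_pos h, if_pos ⟨hm, hij⟩, hm]
        simp
      · rw [if_neg h, if_neg (by rintro ⟨rfl, rfl⟩; omega), smul_zero]
    rw [Finset.sum_congr rfl hterm]
    by_cases hij : i = j
    · simp only [hij, and_true]
      rw [Finset.sum_ite_eq' (Finset.range n) 0 (fun _ => (1:k)),
        if_pos (Finset.mem_range.mpr hn)]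
      simp
    · simp [hij]
  have hUTCm : ∀ m : ℕ, UT (γ⁻¹ ^ m) (C ^ m) := fun m => hUTC.pow m
  have hlast : n - 1 < n := by omega
  set last : Fin n := ⟨n - 1, hlast⟩ with hlastdef
  set P : Matrix (Fin n) (Fin n) k :=
    Matrix.of (fun i j : Fin n => (T ^ (n - 1 - (j:ℕ))) i last) with hPdef
  have hTm : ∀ (m : ℕ) (i j : Fin n), (T ^ m) i j =
      β ^ m * (if h : (i:ℕ) + m < n then (C ^ m) ⟨(i:ℕ)+m, h⟩ j else 0) := by
    intro m i j
    rw [hTpow, Matrix.smul_apply, hNdef, NpowMul_apply, smul_eq_mul]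
  have hPij : ∀ i j : Fin n, P i j = (T ^ (n - 1 - (j:ℕ))) i last := fun i j => rfl
  have hPtri : P.BlockTriangular id := by
    intro i j hji
    simp only [id] at hji
    rw [hPij, hTm]
    rw [dif_neg (by have := i.isLt; have := j.isLt; omega), mul_zero]
  have hPdiag : ∀ i : Fin n, P i i = β ^ (n-1-(i:ℕ)) * γ⁻¹ ^ (n-1-(i:ℕ)) := by
    intro i
    rw [hPij, hTm]
    have h1 : (i:ℕ) + (n - 1 - (i:ℕ)) < n := by have := i.isLt; omega
    rw [dif_pos h1]
    have h2 : (⟨(i:ℕ) + (n-1-(i:ℕ)), h1⟩ : Fin n) = last := by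
      rw [hlastdef]; exact Fin.ext (by simp; have := i.isLt; omega)
    rw [h2, hUTCm _ last last le_rfl, if_pos rfl]
  have hPdet : IsUnit P.det := by
    rw [Matrix.det_of_upperTriangular hPtri]
    rw [isUnit_iff_ne_zero]
    apply Finset.prod_ne_zero_iff.mpr
    intro i _
    rw [hPdiag]
    exact mul_ne_zero (pow_ne_zero _ hβ) (pow_ne_zero _ (inv_ne_zero hγ))
  have hP : IsUnit P := (Matrix.isUnit_iff_isUnit_det P).mpr hPdet
  have hTP : T * P = P * N := by
    ext i j
    have e1 : (T * P) i j = (T ^ (n - (j:ℕ))) i last := by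
      have hexp : n - (j:ℕ) = (n - 1 - (j:ℕ)) + 1 := by have := j.isLt; omega
      rw [hexp, pow_succ', Matrix.mul_apply, Matrix.mul_apply]
      rfl
    rw [e1, hNdef, mulN_apply]
    by_cases hj : 1 ≤ (j:ℕ)
    · rw [dif_pos hj, hPij]
      show (T ^ (n - (j:ℕ))) i last = (T ^ (n - 1 - ((j:ℕ) - 1))) i last
      have : n - 1 - ((j:ℕ) - 1) = n - (j:ℕ) := by omega
      rw [this]
    · rw [dif_neg hj]
      have : n - (j:ℕ) = n := by omega
      rw [this, hTn]
      rfl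
  have hMP : (A * B⁻¹) * P = P * jordanBlock n μ := by
    rw [hBinv, hM, add_mul, Matrix.smul_mul, Matrix.one_mul, hTP,
      jordanBlock_eq μ, Matrix.mul_add, Matrix.mul_smul, Matrix.mul_one, hNdef]
  refine ⟨P, hP, ?_⟩
  rw [Matrix.mul_assoc, hMP, ← Matrix.mul_assoc, Matrix.nonsing_inv_mul P hPdet,
    Matrix.one_mul]
end

section
/- Two spatial matrices of the same size m×n×q are equivalent if and only if their regular parts are equivalent. In particular: if 𝔸 = 𝔸' ⊕ 𝕆 and 𝔹 = 𝔹' ⊕ 𝕆 where 𝔸', 𝔹' are regular r1×r2×r3 spatial matrices (all three slice systems have full rank) and 𝕆 is the zero spatial matrix of complementary size, then 𝔸 is equivalent to 𝔹 iff 𝔸' is equivalent to 𝔹'. -/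
open Matrix

/-- Equivalence of spatial matrices: `b` is obtained from `a` by an equivalence
transformation given by invertible matrices `R`, `S`, `T`. -/
def SpatialEquiv {k : Type*} [Field k] {I1 I2 I3 : Type*}
    [Fintype I1] [DecidableEq I1] [Fintype I2] [DecidableEq I2]
    [Fintype I3] [DecidableEq I3] (a b : I1 → I2 → I3 → k) : Prop :=
  ∃ (R : Matrix I1 I1 k) (S : Matrix I2 I2 k) (T : Matrix I3 I3 k),
    IsUnit R ∧ IsUnit S ∧ IsUnit T ∧
    ∀ i' j' k', b i' j' k' = ∑ i, ∑ j, ∑ kk, a i j kk * R i i' * S j j' * T kk k'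

/-- A spatial matrix is regular if each of its three systems of slice matrices has full
rank. -/
def SpatialRegular {k : Type*} [Field k] {I1 I2 I3 : Type*}
    [Fintype I1] [Fintype I2] [Fintype I3] (a : I1 → I2 → I3 → k) : Prop :=
  Module.finrank k (Submodule.span k
      (Set.range fun i => (Matrix.of fun j kk => a i j kk : Matrix I2 I3 k))) = Fintype.card I1 ∧
  Module.finrank k (Submodule.span k
      (Set.range fun j => (Matrix.of fun i kk => a i j kk : Matrix I1 I3 k))) = Fintype.card I2 ∧
  Module.finrank k (Submodule.span k
      (Set.range fun kk => (Matrix.of fun i j => a i j kk : Matrix I1 I2 k))) = Fintype.card I3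

/-- The direct sum `𝔸' ⊕ 𝕆` of a spatial matrix with a zero spatial matrix. -/
def spatialExt {k : Type*} [Field k] {r1 r2 r3 p1 p2 p3 : ℕ}
    (a : Fin r1 → Fin r2 → Fin r3 → k) :
    (Fin r1 ⊕ Fin p1) → (Fin r2 ⊕ Fin p2) → (Fin r3 ⊕ Fin p3) → k
  | Sum.inl i, Sum.inl j, Sum.inl kk => a i j kk
  | _, _, _ => 0

/-! Zero padding contributes nothing to a transform, so an equivalence of the padded matrices
restricts to one of the regular parts given by the corner blocks of `R`, `S`, `T`; conversely
an equivalence of the regular parts extends block-diagonally by identities. The corner blocks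
are invertible because each slice of `b` is a combination, with a column of the block as
coefficients, of slices of a partially transformed `a`: linear independence of the slices of
the regular `b` forces the columns of the block to be independent. -/

section

variable {k : Type*} [Field k]

theorem isUnit_of_linearIndependent_sum_smul {ι V : Type*} [Fintype ι] [DecidableEq ι]
    [AddCommGroup V] [Module k V] {v w : ι → V} {M : Matrix ι ι k}
    (hv : LinearIndependent k v) (hvw : ∀ i', v i' = ∑ i, M i i' • w i) : IsUnit M := by
  refine linearIndependent_cols_iff_isUnit.1
    (LinearIndependent.of_comp (Fintype.linearCombination k w) ?_)
  convert hv
  ext i'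
  simp [Fintype.linearCombination_apply, hvw]

variable {I1 I2 I3 J1 J2 J3 : Type*} [Fintype I1] [Fintype I2] [Fintype I3]

def spatialTransform (a : I1 → I2 → I3 → k) (R : Matrix I1 J1 k) (S : Matrix I2 J2 k)
    (T : Matrix I3 J3 k) : J1 → J2 → J3 → k :=
  fun i' j' k' => ∑ i, ∑ j, ∑ kk, a i j kk * R i i' * S j j' * T kk k'

theorem spatialEquiv_iff_exists_spatialTransform [DecidableEq I1] [DecidableEq I2]
    [DecidableEq I3] {a b : I1 → I2 → I3 → k} :
    SpatialEquiv a b ↔ ∃ (R : Matrix I1 I1 k) (S : Matrix I2 I2 k) (T : Matrix I3 I3 k),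
      IsUnit R ∧ IsUnit S ∧ IsUnit T ∧ b = spatialTransform a R S T := by
  simp only [SpatialEquiv, spatialTransform, funext_iff]

theorem spatialTransform_swap₁₂ (a : I1 → I2 → I3 → k) (R : Matrix I1 J1 k)
    (S : Matrix I2 J2 k) (T : Matrix I3 J3 k) :
    (fun j' i' k' => spatialTransform a R S T i' j' k') =
      spatialTransform (fun j i kk => a i j kk) S R T := by
  ext j' i' k'
  simp only [spatialTransform]
  rw [Finset.sum_comm]
  simp only [mul_right_comm _ (R _ _) (S _ _)]

theorem spatialTransform_rotate (a : I1 → I2 → I3 → k) (R : Matrix I1 J1 k)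
    (S : Matrix I2 J2 k) (T : Matrix I3 J3 k) :
    (fun k' i' j' => spatialTransform a R S T i' j' k') =
      spatialTransform (fun kk i j => a i j kk) T R S := by
  ext k' i' j'
  simp only [spatialTransform]
  conv_rhs => rw [Finset.sum_comm]
  refine Finset.sum_congr rfl fun i _ => ?_
  conv_rhs => rw [Finset.sum_comm]
  exact Finset.sum_congr rfl fun j _ => Finset.sum_congr rfl fun kk _ => by ring

theorem isUnit_of_linearIndependent_slices [DecidableEq I1] {a : I1 → I2 → I3 → k}
    {b : I1 → J2 → J3 → k} {R : Matrix I1 I1 k} {S : Matrix I2 J2 k} {T : Matrix I3 J3 k}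
    (h : b = spatialTransform a R S T)
    (hb : LinearIndependent k fun i => (Matrix.of fun j kk => b i j kk)) : IsUnit R := by
  refine isUnit_of_linearIndependent_sum_smul hb
    (w := fun i => Matrix.of fun j' k' => ∑ j, ∑ kk, a i j kk * S j j' * T kk k') fun i' => ?_
  ext j' k'
  simp only [h, spatialTransform, Matrix.sum_apply, Matrix.smul_apply, Matrix.of_apply,
    smul_eq_mul, Finset.mul_sum]
  exact Finset.sum_congr rfl fun i _ => Finset.sum_congr rfl fun j _ =>
    Finset.sum_congr rfl fun kk _ => by ring

theorem SpatialRegular.isUnit_of_eq_spatialTransform [DecidableEq I1] [DecidableEq I2]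
    [DecidableEq I3] {a b : I1 → I2 → I3 → k} {R : Matrix I1 I1 k} {S : Matrix I2 I2 k}
    {T : Matrix I3 I3 k} (hb : SpatialRegular b) (h : b = spatialTransform a R S T) :
    IsUnit R ∧ IsUnit S ∧ IsUnit T := by
  obtain ⟨h1, h2, h3⟩ := hb
  subst h
  exact ⟨isUnit_of_linearIndependent_slices rfl
      (linearIndependent_iff_card_eq_finrank_span.2 h1.symm),
    isUnit_of_linearIndependent_slices (spatialTransform_swap₁₂ a R S T)
      (linearIndependent_iff_card_eq_finrank_span.2 h2.symm),
    isUnit_of_linearIndependent_slices (spatialTransform_rotate a R S T)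
      (linearIndependent_iff_card_eq_finrank_span.2 h3.symm)⟩

end

section

variable {k : Type*} [Field k] {r1 r2 r3 p1 p2 p3 : ℕ}

theorem spatialTransform_spatialExt {J1 J2 J3 : Type*} (a : Fin r1 → Fin r2 → Fin r3 → k)
    (R : Matrix (Fin r1 ⊕ Fin p1) J1 k) (S : Matrix (Fin r2 ⊕ Fin p2) J2 k)
    (T : Matrix (Fin r3 ⊕ Fin p3) J3 k) :
    spatialTransform (spatialExt a) R S T =
      spatialTransform a (R.submatrix Sum.inl id) (S.submatrix Sum.inl id)
        (T.submatrix Sum.inl id) := by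
  ext i' j' k'
  simp [spatialTransform, Fintype.sum_sum_type, spatialExt]

theorem eq_spatialTransform_toBlocks₁₁ {s1 s2 s3 q1 q2 q3 : ℕ}
    {a : Fin r1 → Fin r2 → Fin r3 → k} {b : Fin s1 → Fin s2 → Fin s3 → k}
    {R : Matrix (Fin r1 ⊕ Fin p1) (Fin s1 ⊕ Fin q1) k}
    {S : Matrix (Fin r2 ⊕ Fin p2) (Fin s2 ⊕ Fin q2) k}
    {T : Matrix (Fin r3 ⊕ Fin p3) (Fin s3 ⊕ Fin q3) k}
    (h : spatialExt b = spatialTransform (spatialExt a) R S T) :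
    b = spatialTransform a R.toBlocks₁₁ S.toBlocks₁₁ T.toBlocks₁₁ := by
  rw [spatialTransform_spatialExt] at h
  ext i j kk
  simpa [spatialTransform, spatialExt, toBlocks₁₁] using
    congrFun (congrFun (congrFun h (.inl i)) (.inl j)) (.inl kk)

theorem spatialTransform_spatialExt_fromBlocks {s1 s2 s3 q1 q2 q3 : ℕ}
    (a : Fin r1 → Fin r2 → Fin r3 → k) (R : Matrix (Fin r1) (Fin s1) k)
    (S : Matrix (Fin r2) (Fin s2) k) (T : Matrix (Fin r3) (Fin s3) k)
    (R₂ : Matrix (Fin p1) (Fin q1) k) (S₂ : Matrix (Fin p2) (Fin q2) k)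
    (T₂ : Matrix (Fin p3) (Fin q3) k) :
    spatialTransform (spatialExt a) (fromBlocks R 0 0 R₂) (fromBlocks S 0 0 S₂)
      (fromBlocks T 0 0 T₂) = spatialExt (spatialTransform a R S T) := by
  rw [spatialTransform_spatialExt]
  ext (i' | i') (j' | j') (k' | k') <;> simp [spatialTransform, spatialExt]

end

theorem spatialEquiv_iff_regular_parts_equiv_general
    (k : Type*) [Field k] (r1 r2 r3 p1 p2 p3 : ℕ)
    (a b : Fin r1 → Fin r2 → Fin r3 → k)
    (hb : SpatialRegular b) :
    SpatialEquiv (spatialExt (p1 := p1) (p2 := p2) (p3 := p3) a)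
        (spatialExt (p1 := p1) (p2 := p2) (p3 := p3) b)
      ↔ SpatialEquiv a b := by
  simp only [spatialEquiv_iff_exists_spatialTransform]
  constructor
  · rintro ⟨R, S, T, -, -, -, h⟩
    have h₁₁ := eq_spatialTransform_toBlocks₁₁ h
    obtain ⟨hR, hS, hT⟩ := hb.isUnit_of_eq_spatialTransform h₁₁
    exact ⟨_, _, _, hR, hS, hT, h₁₁⟩
  · rintro ⟨R, S, T, hR, hS, hT, rfl⟩
    exact ⟨fromBlocks R 0 0 1, fromBlocks S 0 0 1, fromBlocks T 0 0 1,
      isUnit_fromBlocks_zero₂₁.2 ⟨hR, isUnit_one⟩, isUnit_fromBlocks_zero₂₁.2 ⟨hS, isUnit_one⟩,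
      isUnit_fromBlocks_zero₂₁.2 ⟨hT, isUnit_one⟩,
      (spatialTransform_spatialExt_fromBlocks a R S T 1 1 1).symm⟩

/-- Two spatial matrices of the same size are equivalent if and only if their regular
parts are equivalent. -/
theorem spatialEquiv_iff_regular_parts_equiv
    (k : Type*) [Field k] (r1 r2 r3 p1 p2 p3 : ℕ)
    (a b : Fin r1 → Fin r2 → Fin r3 → k)
    (ha : SpatialRegular a) (hb : SpatialRegular b) :
    SpatialEquiv (spatialExt (p1 := p1) (p2 := p2) (p3 := p3) a)
        (spatialExt (p1 := p1) (p2 := p2) (p3 := p3) b)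
      ↔ SpatialEquiv a b :=
  spatialEquiv_iff_regular_parts_equiv_general k r1 r2 r3 p1 p2 p3 a b hb
end

section
/- Let A1, A2, A3 be matrices such that for all scalars (α,β) ≠ (0,0), rank(A1 + αA2 + βA3) > rank A1, for all γ ≠ 0, rank(A2 + γA3) > rank A2, and rank A1 > rank A2 > rank A3' for a given A3'. If T = [t_{ij}] is an invertible 3×3 matrix with rank(A1t_{11}+A2t_{21}+A3t_{31}) = rank A1, rank(A1t_{12}+A2t_{22}+A3t_{32}) = rank A2, and rank(A1t_{13}+A2t_{23}+A3t_{33}) = rank A3', then t_{ij} = 0 for all i ≠ j. -/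
open Matrix

lemma my_rank_smul {k : Type*} [Field k] {m n : ℕ} (a : k) (ha : a ≠ 0)
    (A : Matrix (Fin m) (Fin n) k) : (a • A).rank = A.rank := by
  have h : (a • A).mulVecLin = a • A.mulVecLin := by
    ext v i
    simp [Matrix.mulVecLin_apply, Matrix.smul_mulVec]
  rw [Matrix.rank, h, LinearMap.range_smul _ a ha, Matrix.rank]

/-- If `c ≠ 0` then `rank (c•A1 + a•A2 + b•A3) ≥ rank A1` under hypothesis (1). -/
lemma my_ge_rank1 {k : Type*} [Field k] {m n : ℕ}
    (A1 A2 A3 : Matrix (Fin m) (Fin n) k)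
    (h1 : ∀ α β : k, ¬(α = 0 ∧ β = 0) → (A1 + α • A2 + β • A3).rank > A1.rank)
    (c a b : k) (hc : c ≠ 0) :
    (c • A1 + a • A2 + b • A3).rank ≥ A1.rank := by
  have key : c • A1 + a • A2 + b • A3 = c • (A1 + (a/c) • A2 + (b/c) • A3) := by
    rw [smul_add, smul_add, smul_smul, smul_smul]
    field_simp
  rw [key, my_rank_smul c hc]
  by_cases h : a / c = 0 ∧ b / c = 0
  · rw [h.1, h.2]; simp
  · exact le_of_lt (h1 _ _ h)

/-- If the three columns of an invertible `3×3` matrix `T` recombine `A1, A2, A3` without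
changing the prescribed ranks, and the rank hypotheses (1)–(3) hold, then `T` is
diagonal. -/
theorem rank_preserving_recombination_is_diagonal
    (k : Type*) [Field k] (m n : ℕ)
    (A1 A2 A3 A3' : Matrix (Fin m) (Fin n) k)
    (h1 : ∀ α β : k, ¬(α = 0 ∧ β = 0) → (A1 + α • A2 + β • A3).rank > A1.rank)
    (h2 : ∀ γ : k, γ ≠ 0 → (A2 + γ • A3).rank > A2.rank)
    (h3 : A1.rank > A2.rank) (h4 : A2.rank > A3'.rank)
    (T : Matrix (Fin 3) (Fin 3) k) (hT : IsUnit T)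
    (hc1 : (T 0 0 • A1 + T 1 0 • A2 + T 2 0 • A3).rank = A1.rank)
    (hc2 : (T 0 1 • A1 + T 1 1 • A2 + T 2 1 • A3).rank = A2.rank)
    (hc3 : (T 0 2 • A1 + T 1 2 • A2 + T 2 2 • A3).rank = A3'.rank) :
    ∀ i j : Fin 3, i ≠ j → T i j = 0 := by
  -- helper: if a ≠ 0 then rank (a•A2 + b•A3) ≥ rank A2, strictly if b ≠ 0
  have ge2 : ∀ a b : k, a ≠ 0 → (a • A2 + b • A3).rank ≥ A2.rank := by
    intro a b ha
    have key : a • A2 + b • A3 = a • (A2 + (b/a) • A3) := by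
      rw [smul_add, smul_smul]; field_simp
    rw [key, my_rank_smul a ha]
    by_cases hb : b / a = 0
    · rw [hb]; simp
    · exact le_of_lt (h2 _ hb)
  -- Step 1: T 0 2 = 0
  have h02 : T 0 2 = 0 := by
    by_contra h
    have := my_ge_rank1 A1 A2 A3 h1 (T 0 2) (T 1 2) (T 2 2) h
    omega
  -- Step 2: T 1 2 = 0
  have h12 : T 1 2 = 0 := by
    by_contra h
    rw [h02, zero_smul, zero_add] at hc3
    have := ge2 (T 1 2) (T 2 2) h
    omega
  -- Step 3: T 0 1 = 0
  have h01 : T 0 1 = 0 := by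
    by_contra h
    have := my_ge_rank1 A1 A2 A3 h1 (T 0 1) (T 1 1) (T 2 1) h
    omega
  -- invertibility: det = T 0 0 * T 1 1 * T 2 2 ≠ 0
  have hdet : T.det ≠ 0 := by
    intro h
    have hd := (Matrix.isUnit_iff_isUnit_det T).mp hT
    rw [h] at hd
    exact not_isUnit_zero hd
  rw [Matrix.det_fin_three, h01, h02, h12] at hdet
  simp only [zero_mul, mul_zero, sub_zero, mul_one, add_zero, zero_sub, neg_zero] at hdet
  have h00 : T 0 0 ≠ 0 := by intro h; rw [h] at hdet; simp at hdet
  have h11 : T 1 1 ≠ 0 := by intro h; rw [h] at hdet; simp at hdet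
  -- Step 4: T 2 1 = 0
  have h21 : T 2 1 = 0 := by
    by_contra h
    rw [h01, zero_smul, zero_add] at hc2
    have key : T 1 1 • A2 + T 2 1 • A3 = T 1 1 • (A2 + (T 2 1 / T 1 1) • A3) := by
      rw [smul_add, smul_smul]; field_simp
    rw [key, my_rank_smul _ h11] at hc2
    have := h2 (T 2 1 / T 1 1) (div_ne_zero h h11)
    omega
  -- Step 5: T 1 0 = 0 and T 2 0 = 0
  have key : T 0 0 • A1 + T 1 0 • A2 + T 2 0 • A3
      = T 0 0 • (A1 + (T 1 0 / T 0 0) • A2 + (T 2 0 / T 0 0) • A3) := by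
    rw [smul_add, smul_add, smul_smul, smul_smul]
    field_simp
  rw [key, my_rank_smul _ h00] at hc1
  have hz : T 1 0 / T 0 0 = 0 ∧ T 2 0 / T 0 0 = 0 := by
    by_contra h
    have := h1 _ _ h
    omega
  have h10 : T 1 0 = 0 := by
    have := hz.1; field_simp at this; simpa using this
  have h20 : T 2 0 = 0 := by
    have := hz.2; field_simp at this; simpa using this
  intro i j hij
  fin_cases i <;> fin_cases j <;> simp_all
end
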